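/- arXiv:1612.06052 — 4 statements merged into one kernel-verified Lean document; each statement's English description precedes it below -/
import Mathlib

section
/- Let W, Q ∈ ℝ^N with Q ≠ 0 and ⟨Q, W⟩ > 0. Then the function s ↦ ‖2^s Q − W‖² over the integers s ∈ ℤ attains its minimum at s = ⌊log₂(4⟨Q,W⟩/(3‖Q‖²))⌋. -/
/-- For `W, Q ∈ ℝ^N` with `Q ≠ 0` and `⟨Q, W⟩ > 0`, the function
`s ↦ ‖2^s Q − W‖²` over the integers attains its minimum at
`s = ⌊log₂ (4⟨Q,W⟩ / (3‖Q‖²))⌋`. -/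
theorem optimal_power_of_two_scale {N : ℕ} (W Q : Fin N → ℝ) (hQ : Q ≠ 0)
    (hQW : 0 < ∑ i, Q i * W i) (s : ℤ) :
    ∑ i, ((2 : ℝ) ^ ⌊Real.logb 2 (4 * (∑ j, Q j * W j) / (3 * ∑ j, (Q j) ^ 2))⌋ * Q i - W i) ^ 2
      ≤ ∑ i, ((2 : ℝ) ^ s * Q i - W i) ^ 2 := by
  set a : ℝ := ∑ j, (Q j) ^ 2 with ha_def
  set b : ℝ := ∑ j, Q j * W j with hb_def
  have ha : 0 < a := by
    obtain ⟨i, hi⟩ : ∃ i, Q i ≠ 0 := by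
      by_contra h
      push_neg at h
      exact hQ (funext h)
    exact Finset.sum_pos' (fun j _ => sq_nonneg _)
      ⟨i, Finset.mem_univ i, by positivity⟩
  set s₀ : ℤ := ⌊Real.logb 2 (4 * b / (3 * a))⌋ with hs₀
  have expand : ∀ t : ℝ, ∑ i, (t * Q i - W i) ^ 2
      = t ^ 2 * a - 2 * t * b + ∑ i, (W i) ^ 2 := by
    intro t
    have : ∀ i, (t * Q i - W i) ^ 2
        = t ^ 2 * (Q i) ^ 2 - 2 * t * (Q i * W i) + (W i) ^ 2 := by
      intro i; ring
    simp_rw [this, Finset.sum_add_distrib, Finset.sum_sub_distrib, ← Finset.mul_sum]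
    rfl
  rw [expand, expand]
  have hx : 0 < 4 * b / (3 * a) := by positivity
  have h1 : (2 : ℝ) ^ s₀ ≤ 4 * b / (3 * a) := by
    calc (2 : ℝ) ^ s₀ = (2 : ℝ) ^ (s₀ : ℝ) := (Real.rpow_intCast 2 s₀).symm
      _ ≤ (2 : ℝ) ^ (Real.logb 2 (4 * b / (3 * a))) :=
        Real.rpow_le_rpow_of_exponent_le one_le_two (Int.floor_le _)
      _ = 4 * b / (3 * a) := Real.rpow_logb (by norm_num) (by norm_num) hx
  have h2 : 4 * b / (3 * a) < (2 : ℝ) ^ (s₀ + 1) := by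
    calc 4 * b / (3 * a) = (2 : ℝ) ^ (Real.logb 2 (4 * b / (3 * a))) :=
        (Real.rpow_logb (by norm_num) (by norm_num) hx).symm
      _ < (2 : ℝ) ^ ((s₀ : ℝ) + 1) :=
        Real.rpow_lt_rpow_of_exponent_lt one_lt_two (Int.lt_floor_add_one _)
      _ = (2 : ℝ) ^ (s₀ + 1) := by
        rw [← Real.rpow_intCast 2 (s₀ + 1)]; norm_num
  set t₀ : ℝ := (2 : ℝ) ^ s₀ with ht₀'
  set t : ℝ := (2 : ℝ) ^ s with ht'
  have ht₀ : 0 < t₀ := zpow_pos (by norm_num) _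
  have ht : 0 < t := zpow_pos (by norm_num) _
  have hA : 3 * a * t₀ ≤ 4 * b := by
    rw [le_div_iff₀ (by positivity : (0:ℝ) < 3 * a)] at h1
    linarith
  have hB : 4 * b < 6 * a * t₀ := by
    have h2' : 4 * b < 3 * a * (2 : ℝ) ^ (s₀ + 1) := by
      rw [div_lt_iff₀ (by positivity)] at h2; linarith
    have : (2 : ℝ) ^ (s₀ + 1) = 2 * t₀ := by
      rw [ht₀', zpow_add₀ (by norm_num : (2:ℝ) ≠ 0)]; ring
    rw [this] at h2'; linarith
  rcases lt_or_ge s (s₀ + 1) with hc | hc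
  · have hc' : s ≤ s₀ := by omega
    rcases eq_or_lt_of_le hc' with rfl | hlt
    · exact le_refl _
    · have hs' : s ≤ s₀ - 1 := by omega
      have ht2 : 2 * t ≤ t₀ := by
        have : t ≤ (2 : ℝ) ^ (s₀ - 1) :=
          zpow_le_zpow_right₀ one_le_two hs'
        have he : (2 : ℝ) ^ (s₀ - 1) * 2 = t₀ := by
          rw [ht₀', ← zpow_add_one₀ (by norm_num : (2:ℝ) ≠ 0)]; ring_nf
        nlinarith
      have key : 0 ≤ 2 * b - a * (t + t₀) := by nlinarith
      nlinarith [mul_nonneg (by linarith : (0:ℝ) ≤ t₀ - t) key]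
  · have ht2 : 2 * t₀ ≤ t := by
      have : (2 : ℝ) ^ (s₀ + 1) ≤ t := zpow_le_zpow_right₀ one_le_two hc
      have he : (2 : ℝ) ^ (s₀ + 1) = 2 * t₀ := by
        rw [ht₀', zpow_add₀ (by norm_num : (2:ℝ) ≠ 0)]; ring
      linarith [he ▸ this]
    have key : 0 ≤ a * (t + t₀) - 2 * b := by nlinarith
    nlinarith [mul_nonneg (by linarith : (0:ℝ) ≤ t - t₀) key]
end

section
/- Let W ∈ ℝ^N, n ≥ 1, and k₀, …, k_{n−1} ∈ ℕ with k₀ + ⋯ + k_{n−1} ≤ N. Suppose Q ∈ ℝ^N has, for each t = 0, …, n−1, exactly k_t entries equal to +2^{−t} or −2^{−t}, and all remaining entries equal to 0. Then |⟨Q, W⟩| ≤ Σ_{t=0}^{n−1} 2^{−t} ‖W_{[k_t]}‖₁. -/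
/-- `groupAbsSum W σ a b` is the ℓ¹ norm of the part of `W` whose magnitude-ranks
(with respect to the sorting permutation `σ`) lie in `[a, b)`; when `σ` sorts the
entries of `W` in decreasing order of magnitude, `groupAbsSum W σ (P t) (P t + k t)`
equals `‖W_{[k_t]}‖₁` where `P t = k 0 + ⋯ + k (t-1)`. -/
noncomputable def groupAbsSum {N : ℕ} (W : Fin N → ℝ) (σ : Equiv.Perm (Fin N))
    (a b : ℕ) : ℝ :=
  ∑ r ∈ Finset.univ.filter (fun r : Fin N => a ≤ (r : ℕ) ∧ (r : ℕ) < b), |W (σ r)|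

/-- `prefSum k t = k 0 + k 1 + ⋯ + k (t − 1)`. -/
def prefSum (k : ℕ → ℕ) (t : ℕ) : ℕ := ∑ j ∈ Finset.range t, k j

/-!
Bound `|⟨Q, W⟩|` by `∑ₜ 2^(-t) ∑_{|Q i| = 2^(-t)} |W i|`. The first `m` levels of `Q` together
occupy `k₀ + ⋯ + k_{m-1}` indices, so their share of `∑ |W i|` is at most that of the same number
of largest entries of `W`. Since the weights `2^(-t)` decrease, Abel summation turns these
comparisons of partial sums into the bound.
-/

open Finset

section Rearrangement

variable {ι M : Type*} [AddCommMonoid M] [LinearOrder M] [IsOrderedCancelAddMonoid M]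

theorem Finset.sum_le_sum_of_card_eq_of_forall_sdiff_le [DecidableEq ι] {s t : Finset ι}
    {f : ι → M} (hst : #s = #t) (hf : ∀ x ∈ s \ t, ∀ y ∈ t \ s, f x ≤ f y) :
    ∑ i ∈ s, f i ≤ ∑ i ∈ t, f i := by
  rw [← sum_sdiff_le_sum_sdiff]
  rcases (t \ s).eq_empty_or_nonempty with hts | hts
  · have hst' : s \ t = ∅ := by rw [← card_eq_zero, card_sdiff_comm hst, hts, card_empty]
    rw [hst', hts]
  · calc ∑ i ∈ s \ t, f i ≤ #(s \ t) • (t \ s).inf' hts f :=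
          sum_le_card_nsmul _ _ _ fun x hx => le_inf' hts f fun y hy => hf x hx y hy
      _ = #(t \ s) • (t \ s).inf' hts f := by rw [card_sdiff_comm hst]
      _ ≤ ∑ i ∈ t \ s, f i := card_nsmul_le_sum _ _ _ fun y hy => inf'_le f hy

theorem Fin.sum_le_sum_filter_val_lt_card {N : ℕ} {g : Fin N → M} (hg : Antitone g)
    (B : Finset (Fin N)) :
    ∑ i ∈ B, g i ≤ ∑ i ∈ univ.filter (fun i : Fin N => (i : ℕ) < #B), g i := by
  refine sum_le_sum_of_card_eq_of_forall_sdiff_le ?_ fun x hx y hy => hg ?_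
  · rw [Fin.card_filter_val_lt, min_eq_right (card_le_univ B |>.trans_eq (Fintype.card_fin N))]
  · simp only [mem_sdiff, mem_filter, mem_univ, true_and, not_lt] at hx hy
    exact Fin.le_def.2 (hy.1.le.trans hx.2)

end Rearrangement

theorem sum_mul_le_sum_mul_of_sum_range_le {R : Type*} [CommRing R] [PartialOrder R]
    [IsOrderedRing R] {n : ℕ} {c a b : ℕ → R} (hc : Antitone c)
    (hc₀ : ∀ t, 0 ≤ c t) (hab : ∀ m ≤ n, ∑ t ∈ range m, a t ≤ ∑ t ∈ range m, b t) :
    ∑ t ∈ range n, c t * a t ≤ ∑ t ∈ range n, c t * b t := by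
  rw [← sub_nonneg, ← sum_sub_distrib]
  simp_rw [← mul_sub, ← smul_eq_mul]
  rw [sum_range_by_parts]
  have hD : ∀ m ≤ n, 0 ≤ ∑ t ∈ range m, (b t - a t) := fun m hm => by
    rw [sum_sub_distrib, sub_nonneg]; exact hab m hm
  refine sub_nonneg.2 ((sum_nonpos fun i hi => ?_).trans (smul_nonneg (hc₀ _) (hD n le_rfl)))
  have hi : i + 1 ≤ n := by rw [mem_range] at hi; omega
  exact smul_nonpos_of_nonpos_of_nonneg (sub_nonpos.2 (hc i.le_succ)) (hD _ hi)

section Levels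

variable {ι κ R : Type*} [Fintype ι] [DecidableEq R]

theorem Finset.sum_fiberwise_eq_sum_filter_image {β : Type*} [AddCommMonoid β] (f : ι → R)
    {c : κ → R} {s : Finset κ} (hc : Set.InjOn c s) (g : ι → β) :
    ∑ t ∈ s, ∑ i with f i = c t, g i = ∑ i with f i ∈ s.image c, g i := by
  rw [← sum_fiberwise_eq_sum_filter univ (s.image c) f g, sum_image fun _ hx _ hy h => hc hx hy h]

theorem Finset.sum_mul_eq_sum_mul_sum_fiberwise [NonUnitalNonAssocSemiring R] (f g : ι → R)
    {c : κ → R} {s : Finset κ} (hc : Set.InjOn c s) (hf : ∀ i, f i ≠ 0 → ∃ t ∈ s, f i = c t) :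
    ∑ i, f i * g i = ∑ t ∈ s, c t * ∑ i with f i = c t, g i := by
  simp_rw [mul_sum]
  symm
  calc ∑ t ∈ s, ∑ i with f i = c t, c t * g i
      = ∑ t ∈ s, ∑ i with f i = c t, f i * g i :=
        sum_congr rfl fun t _ => sum_congr rfl fun i hi => by rw [(mem_filter.1 hi).2]
    _ = ∑ i with f i ∈ s.image c, f i * g i := sum_fiberwise_eq_sum_filter_image f hc _
    _ = ∑ i, f i * g i := sum_filter_of_ne fun i _ hfg => by
        obtain ⟨t, ht, hft⟩ := hf i (left_ne_zero_of_mul hfg)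
        exact mem_image.2 ⟨t, ht, hft.symm⟩

end Levels

section GroupAbsSum

variable {N : ℕ} (W : Fin N → ℝ) (σ : Equiv.Perm (Fin N))

theorem groupAbsSum_add {a b c : ℕ} (hab : a ≤ b) (hbc : b ≤ c) :
    groupAbsSum W σ a b + groupAbsSum W σ b c = groupAbsSum W σ a c := by
  unfold groupAbsSum
  rw [← sum_union (disjoint_filter.2 fun r _ h₁ h₂ => by omega), ← filter_or]
  exact sum_congr (filter_congr fun r _ => by omega) fun _ _ => rfl

theorem sum_groupAbsSum_prefSum (k : ℕ → ℕ) (m : ℕ) :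
    ∑ t ∈ range m, groupAbsSum W σ (prefSum k t) (prefSum k t + k t)
      = groupAbsSum W σ 0 (prefSum k m) := by
  induction m with
  | zero => simp [prefSum, groupAbsSum]
  | succ m ih =>
    rw [sum_range_succ, ih, groupAbsSum_add W σ (Nat.zero_le _) (Nat.le_add_right _ _), prefSum,
      prefSum, sum_range_succ]

theorem sum_abs_le_groupAbsSum_zero_card (hσ : Antitone fun r => |W (σ r)|)
    (B : Finset (Fin N)) : ∑ i ∈ B, |W i| ≤ groupAbsSum W σ 0 #B := by
  calc ∑ i ∈ B, |W i| = ∑ r ∈ B.map σ.symm.toEmbedding, |W (σ r)| := by simp [sum_map]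
    _ ≤ _ := Fin.sum_le_sum_filter_val_lt_card hσ _
    _ = groupAbsSum W σ 0 #B := by simp [groupAbsSum]

end GroupAbsSum

theorem inner_le_sorted_bound_general {N n : ℕ} (W : Fin N → ℝ) (k : ℕ → ℕ)
    (σ : Equiv.Perm (Fin N))
    (hσ : ∀ i j : Fin N, i ≤ j → |W (σ j)| ≤ |W (σ i)|)
    (Q : Fin N → ℝ)
    (hcount : ∀ t < n, (Finset.univ.filter
        (fun i : Fin N => Q i = (2 : ℝ) ^ (-(t : ℤ)) ∨ Q i = -(2 : ℝ) ^ (-(t : ℤ)))).card = k t)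
    (hrest : ∀ i : Fin N, Q i ≠ 0 →
        ∃ t < n, Q i = (2 : ℝ) ^ (-(t : ℤ)) ∨ Q i = -(2 : ℝ) ^ (-(t : ℤ))) :
    |∑ i, Q i * W i| ≤
      ∑ t ∈ Finset.range n, (2 : ℝ) ^ (-(t : ℤ)) *
        groupAbsSum W σ (prefSum k t) (prefSum k t + k t) := by
  classical
  set c : ℕ → ℝ := fun t => 2 ^ (-(t : ℤ))
  have hc_anti : Antitone c := fun s t hst => zpow_le_zpow_right₀ one_le_two (by omega)
  have hc_inj : Function.Injective c := fun s t hst => by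
    simpa using zpow_right_injective₀ two_pos (by norm_num : (2 : ℝ) ≠ 1) hst
  have hlevel : ∀ t i, |Q i| = c t ↔ Q i = c t ∨ Q i = -c t := fun t i => abs_eq (by positivity)
  have hpartial : ∀ m ≤ n, ∑ t ∈ range m, ∑ i with |Q i| = c t, |W i|
      ≤ ∑ t ∈ range m, groupAbsSum W σ (prefSum k t) (prefSum k t + k t) := by
    intro m hm
    have hcard : #{i | |Q i| ∈ (range m).image c} = prefSum k m := by
      rw [card_eq_sum_ones, ← sum_fiberwise_eq_sum_filter_image _ hc_inj.injOn]
      refine sum_congr rfl fun t ht => ?_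
      rw [← card_eq_sum_ones, ← hcount t ((mem_range.1 ht).trans_le hm)]
      simp_rw [hlevel]
      rfl
    rw [sum_fiberwise_eq_sum_filter_image _ hc_inj.injOn, sum_groupAbsSum_prefSum, ← hcard]
    exact sum_abs_le_groupAbsSum_zero_card W σ hσ _
  calc |∑ i, Q i * W i| ≤ ∑ i, |Q i| * |W i| := by
        simpa only [abs_mul] using abs_sum_le_sum_abs (fun i => Q i * W i) univ
    _ = ∑ t ∈ range n, c t * ∑ i with |Q i| = c t, |W i| :=
        sum_mul_eq_sum_mul_sum_fiberwise _ _ hc_inj.injOn fun i hi => by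
          obtain ⟨t, ht, hQ⟩ := hrest i (abs_ne_zero.1 hi)
          exact ⟨t, mem_range.2 ht, (hlevel t i).2 hQ⟩
    _ ≤ _ := sum_mul_le_sum_mul_of_sum_range_le hc_anti (fun t => by positivity) hpartial

/-- If `Q ∈ ℝ^N` has, for each `t = 0, …, n−1`, exactly `k t` entries equal to
`±2^(−t)` and all remaining entries `0`, then
`|⟨Q, W⟩| ≤ ∑_{t=0}^{n−1} 2^(−t) ‖W_{[k_t]}‖₁`. -/
theorem inner_le_sorted_bound {N n : ℕ} (hn : 1 ≤ n) (W : Fin N → ℝ) (k : ℕ → ℕ)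
    (hsum : ∑ t ∈ Finset.range n, k t ≤ N)
    (σ : Equiv.Perm (Fin N))
    (hσ : ∀ i j : Fin N, i ≤ j → |W (σ j)| ≤ |W (σ i)|)
    (Q : Fin N → ℝ)
    (hcount : ∀ t < n, (Finset.univ.filter
        (fun i : Fin N => Q i = (2 : ℝ) ^ (-(t : ℤ)) ∨ Q i = -(2 : ℝ) ^ (-(t : ℤ)))).card = k t)
    (hrest : ∀ i : Fin N, Q i ≠ 0 →
        ∃ t < n, Q i = (2 : ℝ) ^ (-(t : ℤ)) ∨ Q i = -(2 : ℝ) ^ (-(t : ℤ))) :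
    |∑ i, Q i * W i| ≤
      ∑ t ∈ Finset.range n, (2 : ℝ) ^ (-(t : ℤ)) *
        groupAbsSum W σ (prefSum k t) (prefSum k t + k t) :=
  inner_le_sorted_bound_general W k σ hσ Q hcount hrest
end

section
/- (Ternary case b = 2 of Theorem 1) Let W ∈ ℝ^N have entries of pairwise distinct nonzero absolute values. Consider the minimization of ‖2^s Q − W‖² over all integers s ∈ ℤ and all vectors Q ∈ {−1, 0, 1}^N. Let k₀* ∈ {1, …, N} be a minimizer over k₀ ∈ {1, …, N} of g(‖W_{[k₀]}‖₁, k₀), where g(u, v) := v·(2^{⌊log₂(4u/(3v))⌋} − u/v)² − u²/v. Then Q* := sign(W_{[k₀*]}) and s* := ⌊log₂(4‖W_{[k₀*]}‖₁/(3k₀*))⌋ form a global minimizer: for every s ∈ ℤ and every Q ∈ {−1, 0, 1}^N, ‖2^{s*} Q* − W‖² ≤ ‖2^s Q − W‖². -/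
/-- `topAbsSum W σ k₀` is `‖W_{[k₀]}‖₁`, the ℓ¹ norm of the vector keeping the `k₀`
largest-in-magnitude entries of `W` (with respect to the sorting permutation `σ`)
and zeroing out the rest. -/
noncomputable def topAbsSum {N : ℕ} (W : Fin N → ℝ) (σ : Equiv.Perm (Fin N))
    (k₀ : ℕ) : ℝ :=
  ∑ r ∈ Finset.univ.filter (fun r : Fin N => (r : ℕ) < k₀), |W (σ r)|

/-- `g u v = v (2^⌊log₂(4u/(3v))⌋ − u/v)² − u²/v`. -/
noncomputable def g (u v : ℝ) : ℝ :=
  v * ((2 : ℝ) ^ ⌊Real.logb 2 (4 * u / (3 * v))⌋ - u / v) ^ 2 - u ^ 2 / v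


lemma pow2_floor_bounds {c : ℝ} (hc : 0 < c) :
    (3/4) * (2:ℝ)^(⌊Real.logb 2 (4*c/3)⌋) ≤ c ∧ c < (3/2) * (2:ℝ)^(⌊Real.logb 2 (4*c/3)⌋) := by
  set m := ⌊Real.logb 2 (4*c/3)⌋ with hm
  have h4 : (0:ℝ) < 4*c/3 := by positivity
  have hz : ∀ n : ℤ, (2:ℝ)^((n:ℝ)) = (2:ℝ)^n := fun n => Real.rpow_intCast 2 n
  have h1 : (2:ℝ)^m ≤ 4*c/3 := by
    rw [← hz]
    calc (2:ℝ)^((m:ℝ)) ≤ (2:ℝ)^(Real.logb 2 (4*c/3)) :=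
          Real.rpow_le_rpow_of_exponent_le (by norm_num) (Int.floor_le _)
      _ = 4*c/3 := Real.rpow_logb (by norm_num) (by norm_num) h4
  have h2 : 4*c/3 < 2*(2:ℝ)^m := by
    have : 4*c/3 < (2:ℝ)^((m:ℝ)+1) := by
      calc 4*c/3 = (2:ℝ)^(Real.logb 2 (4*c/3)) := (Real.rpow_logb (by norm_num) (by norm_num) h4).symm
        _ < (2:ℝ)^((m:ℝ)+1) := Real.rpow_lt_rpow_of_exponent_lt (by norm_num)
            (by rw [hm]; push_cast; exact Int.lt_floor_add_one _)
    have h3 : (2:ℝ)^((m:ℝ)+1) = 2*(2:ℝ)^m := by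
      rw [show ((m:ℝ)+1) = (((m+1 : ℤ)):ℝ) by push_cast; ring, hz]
      rw [zpow_add₀ (by norm_num : (2:ℝ) ≠ 0)]
      ring
    linarith
  constructor <;> linarith

lemma sq_dist_pow2_le {c : ℝ} (hc : 0 < c) (s : ℤ) :
    ((2:ℝ)^(⌊Real.logb 2 (4*c/3)⌋) - c)^2 ≤ ((2:ℝ)^s - c)^2 := by
  obtain ⟨hl, hr⟩ := pow2_floor_bounds hc
  set m := ⌊Real.logb 2 (4*c/3)⌋ with hm
  have key : ((2:ℝ)^s - c)^2 - ((2:ℝ)^m - c)^2 = ((2:ℝ)^s - (2:ℝ)^m)*((2:ℝ)^s + (2:ℝ)^m - 2*c) := by ring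
  rcases lt_trichotomy s m with h|h|h
  · have hs : (2:ℝ)^s ≤ (2:ℝ)^(m-1) := zpow_le_zpow_right₀ (by norm_num) (by omega)
    have h2 : (2:ℝ)^(m-1) = (2:ℝ)^m / 2 := by
      rw [zpow_sub₀ (by norm_num : (2:ℝ) ≠ 0)]; norm_num
    rw [h2] at hs
    have ha : (2:ℝ)^s - (2:ℝ)^m ≤ 0 := by nlinarith [zpow_pos (show (0:ℝ)<2 by norm_num) m]
    have hb : (2:ℝ)^s + (2:ℝ)^m - 2*c ≤ 0 := by linarith
    nlinarith [mul_nonneg (neg_nonneg.2 ha) (neg_nonneg.2 hb)]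
  · rw [h]
  · have hs : 2*(2:ℝ)^m ≤ (2:ℝ)^s := by
      have : (2:ℝ)^(m+1) ≤ (2:ℝ)^s := zpow_le_zpow_right₀ (by norm_num) (by omega)
      rw [zpow_add₀ (by norm_num : (2:ℝ) ≠ 0)] at this
      linarith [this]
    nlinarith [mul_nonneg
      (show (0:ℝ) ≤ (2:ℝ)^s - (2:ℝ)^m by nlinarith [zpow_pos (show (0:ℝ)<2 by norm_num) m])
      (show (0:ℝ) ≤ (2:ℝ)^s + (2:ℝ)^m - 2*c by linarith)]

lemma arg_eq {u k : ℝ} (hk : k ≠ 0) : 4 * u / (3 * k) = 4 * (u/k) / 3 := by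
  field_simp

lemma g_eq (u k : ℝ) (hk : k ≠ 0) :
    g u k = k * ((2:ℝ)^(⌊Real.logb 2 (4*u/(3*k))⌋))^2 - 2*(2:ℝ)^(⌊Real.logb 2 (4*u/(3*k))⌋)*u := by
  unfold g
  field_simp
  ring

lemma g_le (u k : ℝ) (hu : 0 < u) (hk : 0 < k) (s : ℤ) :
    g u k ≤ k * ((2:ℝ)^s)^2 - 2 * (2:ℝ)^s * u := by
  have hc : 0 < u/k := div_pos hu hk
  have hsq := sq_dist_pow2_le hc s
  unfold g
  rw [arg_eq hk.ne']
  have hexp : k * ((2:ℝ)^s)^2 - 2 * (2:ℝ)^s * u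
      = k * ((2:ℝ)^s - u/k)^2 - u^2/k := by field_simp; ring
  rw [hexp]
  have := mul_le_mul_of_nonneg_left hsq hk.le
  linarith

lemma g_nonpos (u k : ℝ) (hu : 0 < u) (hk : 0 < k) : g u k ≤ 0 := by
  have hc : 0 < u/k := div_pos hu hk
  obtain ⟨hl, hr⟩ := pow2_floor_bounds hc
  unfold g
  rw [arg_eq hk.ne']
  set m := ⌊Real.logb 2 (4*(u/k)/3)⌋ with hm
  have hmp : (0:ℝ) < (2:ℝ)^m := zpow_pos (by norm_num) m
  have hsq : ((2:ℝ)^m - u/k)^2 ≤ (u/k)^2 := by nlinarith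
  have h2 : k * ((2:ℝ)^m - u/k)^2 ≤ k * (u/k)^2 := mul_le_mul_of_nonneg_left hsq hk.le
  have h3 : k * (u/k)^2 = u^2/k := by field_simp
  linarith

lemma filter_lt_eq_map {N k : ℕ} (h : k ≤ N) :
    Finset.univ.filter (fun r : Fin N => (r : ℕ) < k)
      = Finset.univ.map (Fin.castLEEmb h) := by
  ext r
  simp only [Finset.mem_filter, Finset.mem_map, Finset.mem_univ, true_and,
    Fin.castLEEmb, Function.Embedding.coeFn_mk]
  constructor
  · intro hr; exact ⟨⟨(r:ℕ), hr⟩, rfl⟩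
  · rintro ⟨j, rfl⟩; exact j.2

lemma topAbsSum_eq {N k : ℕ} (h : k ≤ N) (W : Fin N → ℝ) (σ : Equiv.Perm (Fin N)) :
    topAbsSum W σ k = ∑ j : Fin k, |W (σ (Fin.castLE h j))| := by
  unfold topAbsSum
  rw [filter_lt_eq_map h, Finset.sum_map]
  rfl

lemma strictMono_fin_le {k : ℕ} {f : Fin k → ℕ} (hf : StrictMono f) :
    ∀ v (hv : v < k), v ≤ f ⟨v, hv⟩ := by
  intro v
  induction v with
  | zero => intro hv; exact Nat.zero_le _
  | succ n ih =>
    intro hv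
    have h1 := ih (Nat.lt_of_succ_lt hv)
    have h2 : f ⟨n, Nat.lt_of_succ_lt hv⟩ < f ⟨n+1, hv⟩ := hf (by simp [Fin.lt_def])
    omega

lemma sum_abs_le_topAbsSum {N : ℕ} (W : Fin N → ℝ) (σ : Equiv.Perm (Fin N))
    (hσ : ∀ i j : Fin N, i ≤ j → |W (σ j)| ≤ |W (σ i)|)
    (S : Finset (Fin N)) :
    ∑ i ∈ S, |W i| ≤ topAbsSum W σ S.card := by
  set k := S.card with hk
  have hkN : k ≤ N := by
    simpa using Finset.card_le_card (Finset.subset_univ S)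
  set T : Finset (Fin N) := S.image σ.symm with hT
  have hTcard : T.card = k := by
    rw [hT, Finset.card_image_of_injective _ σ.symm.injective]
  have h1 : ∑ i ∈ S, |W i| = ∑ r ∈ T, |W (σ r)| := by
    rw [hT, Finset.sum_image (fun a _ b _ h => σ.symm.injective h)]
    simp
  rw [h1, topAbsSum_eq hkN]
  set e := T.orderIsoOfFin hTcard with he
  have h2 : ∑ r ∈ T, |W (σ r)| = ∑ j : Fin k, |W (σ (e j))| := by
    rw [← Finset.sum_coe_sort T (fun r => |W (σ r)|)]
    exact (Equiv.sum_comp e.toEquiv (fun x : T => |W (σ (x : Fin N))|)).symm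
  rw [h2]
  apply Finset.sum_le_sum
  intro j _
  apply hσ
  rw [Fin.le_def]
  have hmono : StrictMono (fun j : Fin k => (((e j) : Fin N) : ℕ)) := by
    intro a b hab
    have := e.strictMono hab
    exact this
  have := strictMono_fin_le hmono j.1 j.2
  simpa using this

/-- Ternary case (`b = 2`) of Theorem 1: if `W ∈ ℝ^N` has entries of pairwise distinct
nonzero absolute values, sorted decreasingly in magnitude by the permutation `σ`, and
`k₀* ∈ {1, …, N}` minimizes `g (‖W_{[k₀]}‖₁) k₀` over `k₀ ∈ {1, …, N}`, then
`Q* = sign(W_{[k₀*]})` and `s* = ⌊log₂(4‖W_{[k₀*]}‖₁/(3k₀*))⌋` globally minimize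
`‖2^s Q − W‖²` over all `s ∈ ℤ` and all `Q ∈ {−1, 0, 1}^N`. -/
theorem exact_ternary_quantization {N : ℕ} (W : Fin N → ℝ)
    (hWne : ∀ i, W i ≠ 0)
    (hWdist : ∀ i j : Fin N, i ≠ j → |W i| ≠ |W j|)
    (σ : Equiv.Perm (Fin N))
    (hσ : ∀ i j : Fin N, i ≤ j → |W (σ j)| ≤ |W (σ i)|)
    (kstar : ℕ) (hk1 : 1 ≤ kstar) (hkN : kstar ≤ N)
    (hkmin : ∀ k₀ : ℕ, 1 ≤ k₀ → k₀ ≤ N →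
      g (topAbsSum W σ kstar) (kstar : ℝ) ≤ g (topAbsSum W σ k₀) (k₀ : ℝ))
    (Qstar : Fin N → ℝ)
    (hQstar : ∀ i : Fin N,
      Qstar i = if ((σ.symm i : Fin N) : ℕ) < kstar then Real.sign (W i) else 0)
    (sstar : ℤ)
    (hsstar : sstar = ⌊Real.logb 2 (4 * topAbsSum W σ kstar / (3 * (kstar : ℝ)))⌋) :
    ∀ (s : ℤ) (Q : Fin N → ℝ),
      (∀ i : Fin N, Q i = -1 ∨ Q i = 0 ∨ Q i = 1) →
      ∑ i, ((2 : ℝ) ^ sstar * Qstar i - W i) ^ 2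
        ≤ ∑ i, ((2 : ℝ) ^ s * Q i - W i) ^ 2 := by
  intro s Q hQ
  have hNpos : 0 < N := lt_of_lt_of_le hk1 hkN
  have htop_pos : ∀ k : ℕ, 1 ≤ k → 0 < topAbsSum W σ k := by
    intro k h1
    unfold topAbsSum
    apply Finset.sum_pos
    · intro r _; exact abs_pos.mpr (hWne _)
    · exact ⟨⟨0, hNpos⟩, by simp; omega⟩
  set u := topAbsSum W σ kstar with hu
  have hupos : 0 < u := htop_pos kstar hk1
  have hkpos : (0:ℝ) < (kstar:ℝ) := by exact_mod_cast hk1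
  have hsign : ∀ i, Real.sign (W i) * W i = |W i| ∧ (Real.sign (W i))^2 = 1 := by
    intro i
    rcases lt_or_gt_of_ne (hWne i) with h|h
    · rw [Real.sign_of_neg h, abs_of_neg h]; constructor <;> ring
    · rw [Real.sign_of_pos h, abs_of_pos h]; constructor <;> ring
  set t1 : ℝ := (2:ℝ)^sstar with ht1
  -- LHS
  have hLHSi : ∀ i, ((2:ℝ)^sstar * Qstar i - W i)^2
      = W i^2 + (if ((σ.symm i : Fin N) : ℕ) < kstar then t1^2 - 2*t1*|W i| else 0) := by
    intro i
    rw [hQstar i]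
    by_cases h : ((σ.symm i : Fin N) : ℕ) < kstar
    · simp only [h, if_true, ← ht1]
      obtain ⟨h1, h2⟩ := hsign i
      linear_combination t1^2 * h2 - 2*t1*h1
    · simp only [h, if_false, ← ht1]
      ring
  have hLHS : ∑ i, ((2:ℝ)^sstar * Qstar i - W i)^2
      = (∑ i, W i^2) + ((kstar:ℝ) * t1^2 - 2*t1*u) := by
    rw [Finset.sum_congr rfl (fun i _ => hLHSi i), Finset.sum_add_distrib]
    congr 1
    rw [← Finset.sum_filter]
    have himg : (Finset.univ.filter (fun i : Fin N => ((σ.symm i : Fin N) : ℕ) < kstar))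
        = (Finset.univ.filter (fun r : Fin N => (r : ℕ) < kstar)).image σ := by
      ext i
      simp only [Finset.mem_filter, Finset.mem_univ, true_and, Finset.mem_image]
      constructor
      · intro h; exact ⟨σ.symm i, h, by simp⟩
      · rintro ⟨r, hr, rfl⟩; simpa using hr
    rw [himg, Finset.sum_image (fun a _ b _ h => σ.injective h)]
    have hcard : (Finset.univ.filter (fun r : Fin N => (r : ℕ) < kstar)).card = kstar := by
      rw [filter_lt_eq_map hkN, Finset.card_map, Finset.card_univ, Fintype.card_fin]
    rw [Finset.sum_sub_distrib, Finset.sum_const, hcard, nsmul_eq_mul]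
    rw [show (∑ r ∈ Finset.univ.filter (fun r : Fin N => (r : ℕ) < kstar), 2*t1*|W (σ r)|)
        = 2*t1*u from by rw [hu]; unfold topAbsSum; rw [Finset.mul_sum]]
  have hLg : (kstar:ℝ) * t1^2 - 2*t1*u = g u (kstar:ℝ) := by
    rw [g_eq u (kstar:ℝ) hkpos.ne', ht1, hsstar, hu]
  -- RHS
  set t : ℝ := (2:ℝ)^s with ht
  have htpos : (0:ℝ) < t := zpow_pos (by norm_num) s
  have hRHSi : ∀ i, ((2:ℝ)^s * Q i - W i)^2
      = W i^2 + (t^2*(Q i)^2 - 2*t*(Q i * W i)) := by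
    intro i; rw [← ht]; ring
  have hRHS : ∑ i, ((2:ℝ)^s * Q i - W i)^2
      = (∑ i, W i^2) + ∑ i, (t^2*(Q i)^2 - 2*t*(Q i * W i)) := by
    rw [Finset.sum_congr rfl (fun i _ => hRHSi i), Finset.sum_add_distrib]
  set S : Finset (Fin N) := Finset.univ.filter (fun i => Q i ≠ 0) with hS
  have hfil : ∑ i, (t^2*(Q i)^2 - 2*t*(Q i * W i))
      = ∑ i ∈ S, (t^2*(Q i)^2 - 2*t*(Q i * W i)) := by
    rw [hS]
    refine (Finset.sum_filter_of_ne ?_).symm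
    intro i _ hne
    intro hQ0
    apply hne
    rw [hQ0]; ring
  have hbound : ∀ i ∈ S, t^2 - 2*t*|W i| ≤ t^2*(Q i)^2 - 2*t*(Q i * W i) := by
    intro i hi
    rw [hS, Finset.mem_filter] at hi
    rcases hQ i with h|h|h
    · rw [h]
      have : -(W i) ≤ |W i| := neg_le_abs _
      nlinarith
    · exact absurd h hi.2
    · rw [h]
      have : W i ≤ |W i| := le_abs_self _
      nlinarith
  have hsum1 : ∑ i ∈ S, (t^2 - 2*t*|W i|) ≤ ∑ i ∈ S, (t^2*(Q i)^2 - 2*t*(Q i * W i)) :=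
    Finset.sum_le_sum hbound
  set k := S.card with hk
  have hsum2 : (k:ℝ)*t^2 - 2*t*(topAbsSum W σ k) ≤ ∑ i ∈ S, (t^2 - 2*t*|W i|) := by
    rw [Finset.sum_sub_distrib, Finset.sum_const, ← hk, nsmul_eq_mul]
    have h1 : ∑ i ∈ S, 2*t*|W i| = 2*t*∑ i ∈ S, |W i| := by rw [Finset.mul_sum]
    rw [h1]
    have h2 := sum_abs_le_topAbsSum W σ hσ S
    nlinarith
  -- combine
  have hfinal : g u (kstar:ℝ) ≤ (k:ℝ)*t^2 - 2*t*(topAbsSum W σ k) := by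
    rcases Nat.eq_zero_or_pos k with h0|h0
    · have hS0 : topAbsSum W σ k = 0 := by
        rw [h0]; unfold topAbsSum; simp
      rw [hS0, h0]
      simp only [Nat.cast_zero, zero_mul, mul_zero, sub_zero]
      exact g_nonpos u (kstar:ℝ) hupos hkpos
    · have hkN' : k ≤ N := by
        rw [hk]; simpa using Finset.card_le_card (Finset.subset_univ S)
      have hkp : (0:ℝ) < (k:ℝ) := by exact_mod_cast h0
      calc g u (kstar:ℝ) ≤ g (topAbsSum W σ k) (k:ℝ) := hkmin k h0 hkN'
        _ ≤ (k:ℝ) * ((2:ℝ)^s)^2 - 2*(2:ℝ)^s*(topAbsSum W σ k) :=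
            g_le _ _ (htop_pos k h0) hkp s
        _ = (k:ℝ)*t^2 - 2*t*(topAbsSum W σ k) := by rw [← ht]
  rw [hLHS, hRHS, hfil]
  linarith [hsum1, hsum2, hfinal, hLg]
end

section
/- (Theorem 2 of the paper) Let b ≥ 2, n = 2^{b−2}, μ > 0, and let W ∈ ℝ^N have entries of pairwise distinct nonzero absolute values, with at least one entry satisfying |W_i| ≥ (2^{2−n}/3)μ. Define the thresholded quantizer Q̃* ∈ ℝ^N entrywise by: Q̃*_i = 0 if |W_i| < (2^{2−n}/3)μ; Q̃*_i = sign(W_i)·2^{1−n} if (2^{2−n}/3)μ ≤ |W_i| < 2^{2−n}μ; Q̃*_i = sign(W_i)·2^{−t} if 2^{−t}μ ≤ |W_i| < 2^{−t+1}μ for some t ∈ {1, …, n−2}; and Q̃*_i = sign(W_i) if |W_i| ≥ μ. For t = 0, …, n−1, let k̃_t* be the number of indices i with Q̃*_i = ±2^{−t}. Then the function s ↦ ‖2^s Q̃* − W‖² over s ∈ ℤ attains its minimum at s̃* = ⌊log₂(4 Σ_{t=0}^{n−1} 2^{−t}‖W_{[k̃_t*]}‖₁ / (3 Σ_{t=0}^{n−1}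 k̃_t* 2^{−2t}))⌋. -/
open Finset Real

theorem sum_sq_mul_sub_eq {ι : Type*} [Fintype ι] (Q W : ι → ℝ) (c : ℝ) :
    ∑ i, (c * Q i - W i) ^ 2
      = c ^ 2 * ∑ i, Q i ^ 2 - 2 * c * ∑ i, Q i * W i + ∑ i, W i ^ 2 := by
  simp only [mul_sum, ← sum_sub_distrib, ← sum_add_distrib]
  exact sum_congr rfl fun i _ => by ring

theorem zpow_floor_logb_two_le_and_lt {x : ℝ} (hx : 0 < x) :
    (2 : ℝ) ^ ⌊logb 2 x⌋ ≤ x ∧ x < 2 * (2 : ℝ) ^ ⌊logb 2 x⌋ := by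
  have h := floor_logb_natCast (b := 2) hx.le
  push_cast at h
  rw [h, mul_comm, ← zpow_add_one₀ two_ne_zero]
  exact ⟨Int.zpow_log_le_self one_lt_two hx, Int.lt_zpow_succ_log_self one_lt_two x⟩

/- `f c = A c² - 2 B c` satisfies `f c - f c₀ = (c - c₀) (A (c + c₀) - 2 B)`, and every other
power of two `c` has `2 c ≤ c₀` or `2 c₀ ≤ c`. -/
theorem zpow_sq_mul_sub_le_of_bounds {A B : ℝ} {s₀ : ℤ} (hA : 0 < A)
    (h₁ : 3 * A * 2 ^ s₀ ≤ 4 * B) (h₂ : 4 * B < 6 * A * 2 ^ s₀) (s : ℤ) :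
    ((2 : ℝ) ^ s₀) ^ 2 * A - 2 * 2 ^ s₀ * B ≤ ((2 : ℝ) ^ s) ^ 2 * A - 2 * 2 ^ s * B := by
  have hpow : ∀ {a b : ℤ}, a < b → 2 * (2 : ℝ) ^ a ≤ 2 ^ b := fun {a b} hab => by
    rw [mul_comm, ← zpow_add_one₀ two_ne_zero]
    exact zpow_le_zpow_right₀ one_le_two (by omega)
  have hc : (0 : ℝ) < 2 ^ s := zpow_pos two_pos s
  have hc₀ : (0 : ℝ) < 2 ^ s₀ := zpow_pos two_pos s₀
  rcases lt_trichotomy s s₀ with h | rfl | h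
  · have := hpow h
    nlinarith [mul_nonneg (sub_nonneg.mpr this) hA.le]
  · rfl
  · have := hpow h
    nlinarith [mul_nonneg (sub_nonneg.mpr this) hA.le]

theorem sum_sq_zpow_floor_logb_mul_sub_le {ι : Type*} [Fintype ι] (Q W : ι → ℝ)
    (hQW : 0 < ∑ i, Q i * W i) (s : ℤ) :
    ∑ i, ((2 : ℝ) ^ ⌊logb 2 ((4 * ∑ i, Q i * W i) / (3 * ∑ i, Q i ^ 2))⌋ * Q i - W i) ^ 2
      ≤ ∑ i, ((2 : ℝ) ^ s * Q i - W i) ^ 2 := by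
  have hQQ : 0 < ∑ i, Q i ^ 2 := by
    obtain ⟨i, -, hi⟩ := exists_ne_zero_of_sum_ne_zero hQW.ne'
    exact sum_pos' (fun j _ => sq_nonneg _)
      ⟨i, mem_univ _, sq_pos_of_ne_zero (left_ne_zero_of_mul hi)⟩
  obtain ⟨h₁, h₂⟩ :=
    zpow_floor_logb_two_le_and_lt (div_pos (mul_pos four_pos hQW) (mul_pos three_pos hQQ))
  rw [le_div_iff₀ (mul_pos three_pos hQQ)] at h₁
  rw [div_lt_iff₀ (mul_pos three_pos hQQ)] at h₂
  rw [sum_sq_mul_sub_eq, sum_sq_mul_sub_eq, add_le_add_iff_right]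
  exact zpow_sq_mul_sub_le_of_bounds hQQ (by linarith) (by linarith) s

theorem Fin.apply_eq_iff_card_filter_lt_of_monotone {N : ℕ} {f : Fin N → ℕ} (hf : Monotone f)
    (r : Fin N) (t : ℕ) :
    f r = t ↔ #{r' | f r' < t} ≤ r ∧ (r : ℕ) < #{r' | f r' < t + 1} := by
  have hlt : ∀ u, (r : ℕ) < #{r' | f r' < u} ↔ f r < u := fun u =>
    Fin.lt_card_filter_univ_iff_apply_of_imp _ fun _ _ hba ha => (hf hba).trans_lt ha
  rw [hlt, ← not_lt, hlt]
  omega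

theorem sum_ite_lt_eq_sum_range {ι M : Type*} [Fintype ι] [AddCommMonoid M] (ℓ : ι → ℕ) (n : ℕ)
    (g : ℕ → ι → M) :
    ∑ i, (if ℓ i < n then g (ℓ i) i else 0) = ∑ t ∈ range n, ∑ i with ℓ i = t, g t i := by
  rw [← sum_filter, ← sum_fiberwise_of_maps_to (g := ℓ) (t := range n) (by simp)]
  refine sum_congr rfl fun t ht => ?_
  rw [filter_filter]
  refine sum_congr (filter_congr fun i _ => ?_) fun i hi => ?_
  · simp only [mem_range] at ht
    constructor
    · exact And.right
    · intro h; exact ⟨h ▸ ht, h⟩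
  · rw [(mem_filter.mp hi).2]

theorem groupAbsSum_prefSum_eq_sum_filter {N : ℕ} {W : Fin N → ℝ} {σ : Equiv.Perm (Fin N)}
    {ℓ : Fin N → ℕ} (hℓ : Monotone (ℓ ∘ σ)) {k : ℕ → ℕ} {t : ℕ}
    (hk : ∀ j ≤ t, k j = #{i | ℓ i = j}) :
    groupAbsSum W σ (prefSum k t) (prefSum k t + k t) = ∑ i with ℓ i = t, |W i| := by
  have hkσ : ∀ j ≤ t, k j = #{r | ℓ (σ r) = j} := fun j hj => by
    rw [hk j hj, card_filter, card_filter]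
    exact (Equiv.sum_comp σ fun i => if ℓ i = j then 1 else 0).symm
  have hP : ∀ u ≤ t + 1, prefSum k u = #{r | ℓ (σ r) < u} := fun u hu => by
    rw [prefSum,
      card_eq_sum_card_fiberwise (f := ℓ ∘ σ) (t := range u) fun r hr => by simpa using hr]
    refine sum_congr rfl fun j hj => ?_
    rw [hkσ j (by simp at hj; omega), filter_filter]
    congr 1
    exact filter_congr fun r _ => by simp at hj ⊢; omega
  have hsucc : prefSum k t + k t = prefSum k (t + 1) := (sum_range_succ k t).symm
  rw [groupAbsSum, hsucc, hP t (by omega), hP (t + 1) le_rfl, sum_filter, sum_filter,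
    ← Equiv.sum_comp σ fun i => if ℓ i = t then |W i| else 0]
  refine sum_congr rfl fun r _ => ?_
  exact if_congr (Fin.apply_eq_iff_card_filter_lt_of_monotone hℓ r t).symm rfl rfl

theorem Real.sign_mul_self_eq_abs (r : ℝ) : Real.sign r * r = |r| := by
  rcases lt_trichotomy r 0 with h | rfl | h
  · rw [Real.sign_of_neg h, abs_of_neg h, neg_one_mul]
  · simp
  · rw [Real.sign_of_pos h, abs_of_pos h, one_mul]

/- Band `t < n` of the quantizer is `[bandThreshold n μ t, bandThreshold n μ (t - 1))`, the
top band being unbounded above. -/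
noncomputable def bandThreshold (n : ℕ) (μ : ℝ) (t : ℕ) : ℝ :=
  if t + 1 = n then (2 : ℝ) ^ ((2 : ℤ) - (n : ℤ)) / 3 * μ else (2 : ℝ) ^ (-(t : ℤ)) * μ

/- The thresholds decrease, so this counts the bands above `x`: it is the index of the band
containing `x`, and equals `n` when `x` lies below all of them. -/
noncomputable def bandLevel (n : ℕ) (μ x : ℝ) : ℕ := #{t : Fin n | x < bandThreshold n μ t}

noncomputable def thresholdQuantize (n : ℕ) (μ w : ℝ) : ℝ :=
  if bandLevel n μ |w| < n then Real.sign w * (2 : ℝ) ^ (-(bandLevel n μ |w| : ℤ)) else 0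

section Quantizer

variable {n : ℕ} {μ : ℝ}

theorem bandThreshold_pos (hμ : 0 < μ) (t : ℕ) : 0 < bandThreshold n μ t := by
  unfold bandThreshold
  split_ifs <;> positivity

theorem bandThreshold_antitone (hμ : 0 < μ) {s t : ℕ} (hst : s ≤ t) (ht : t < n) :
    bandThreshold n μ t ≤ bandThreshold n μ s := by
  have hmono : ∀ {a b : ℤ}, a ≤ b → (2 : ℝ) ^ a ≤ 2 ^ b := zpow_le_zpow_right₀ one_le_two
  unfold bandThreshold
  split_ifs with h₁ h₂ h₂
  · rfl
  · have := hmono (show (2 : ℤ) - n ≤ -(s : ℤ) by omega)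
    have h2 : (0 : ℝ) < 2 ^ ((2 : ℤ) - n) := zpow_pos two_pos _
    nlinarith
  · omega
  · exact mul_le_mul_of_nonneg_right (hmono (by omega)) hμ.le

theorem bandThreshold_last (hn : 1 ≤ n) :
    bandThreshold n μ (n - 1) = (2 : ℝ) ^ ((2 : ℤ) - (n : ℤ)) / 3 * μ :=
  if_pos (by omega)

theorem bandLevel_le (x : ℝ) : bandLevel n μ x ≤ n :=
  (card_le_univ _).trans_eq (Fintype.card_fin n)

theorem bandLevel_antitone : Antitone (bandLevel n μ) := fun _ _ hxy =>
  card_le_card fun _ => by simpa only [mem_filter, mem_univ, true_and] using hxy.trans_lt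

theorem lt_bandThreshold_iff_lt_bandLevel (hμ : 0 < μ) {x : ℝ} {t : ℕ} (ht : t < n) :
    x < bandThreshold n μ t ↔ t < bandLevel n μ x :=
  (Fin.lt_card_filter_univ_iff_apply_of_imp (j := ⟨t, ht⟩) (fun s => x < bandThreshold n μ s)
    fun a _ hba ha => ha.trans_le (bandThreshold_antitone hμ hba a.2)).symm

theorem bandLevel_lt_of_bandThreshold_le (hμ : 0 < μ) (hn : 1 ≤ n) {x : ℝ}
    (hx : bandThreshold n μ (n - 1) ≤ x) : bandLevel n μ x < n := by
  have := (lt_bandThreshold_iff_lt_bandLevel hμ (by omega : n - 1 < n)).not.mp hx.not_gt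
  omega

theorem ne_zero_of_bandLevel_lt (hμ : 0 < μ) {w : ℝ} (h : bandLevel n μ |w| < n) : w ≠ 0 := by
  have := (lt_bandThreshold_iff_lt_bandLevel hμ h).not.mpr (lt_irrefl _)
  exact abs_pos.mp ((bandThreshold_pos hμ _).trans_le (not_lt.mp this))

theorem eq_sign_mul_zpow_of_band (hn : 1 ≤ n) {w q : ℝ}
    (hlow : (2 : ℝ) ^ ((2 : ℤ) - (n : ℤ)) / 3 * μ ≤ |w| →
      |w| < (2 : ℝ) ^ ((2 : ℤ) - (n : ℤ)) * μ → q = Real.sign w * (2 : ℝ) ^ ((1 : ℤ) - (n : ℤ)))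
    (hmid : ∀ t : ℕ, 1 ≤ t → t ≤ n - 2 →
      (2 : ℝ) ^ (-(t : ℤ)) * μ ≤ |w| → |w| < (2 : ℝ) ^ (-(t : ℤ) + 1) * μ →
      q = Real.sign w * (2 : ℝ) ^ (-(t : ℤ)))
    (htop : μ ≤ |w| → q = Real.sign w) {t : ℕ} (ht : t < n)
    (hge : bandThreshold n μ t ≤ |w|) (hlt : ∀ s < t, |w| < bandThreshold n μ s) :
    q = Real.sign w * (2 : ℝ) ^ (-(t : ℤ)) := by
  rcases Nat.eq_zero_or_pos t with rfl | ht₀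
  · rcases le_or_gt μ |w| with hμw | hμw
    · simpa using htop hμw
    obtain rfl : n = 1 := by
      by_contra hn₁
      rw [bandThreshold, if_neg (by omega)] at hge
      norm_num at hge
      linarith
    rw [bandThreshold, if_pos rfl] at hge
    norm_num at hge hlow ⊢
    exact hlow hge (by linarith)
  have hprev := hlt (t - 1) (by omega)
  rw [bandThreshold, if_neg (by omega)] at hprev
  by_cases hlast : t + 1 = n
  · rw [bandThreshold, if_pos hlast] at hge
    rw [show -((t - 1 : ℕ) : ℤ) = 2 - n by omega] at hprev
    rw [hlow hge hprev, show (1 : ℤ) - n = -t by omega]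
  · rw [bandThreshold, if_neg hlast] at hge
    rw [show -((t - 1 : ℕ) : ℤ) = -t + 1 by omega] at hprev
    exact hmid t ht₀ (by omega) hge hprev

theorem eq_thresholdQuantize (hn : 1 ≤ n) (hμ : 0 < μ) {w q : ℝ}
    (hzero : |w| < (2 : ℝ) ^ ((2 : ℤ) - (n : ℤ)) / 3 * μ → q = 0)
    (hlow : (2 : ℝ) ^ ((2 : ℤ) - (n : ℤ)) / 3 * μ ≤ |w| →
      |w| < (2 : ℝ) ^ ((2 : ℤ) - (n : ℤ)) * μ → q = Real.sign w * (2 : ℝ) ^ ((1 : ℤ) - (n : ℤ)))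
    (hmid : ∀ t : ℕ, 1 ≤ t → t ≤ n - 2 →
      (2 : ℝ) ^ (-(t : ℤ)) * μ ≤ |w| → |w| < (2 : ℝ) ^ (-(t : ℤ) + 1) * μ →
      q = Real.sign w * (2 : ℝ) ^ (-(t : ℤ)))
    (htop : μ ≤ |w| → q = Real.sign w) :
    q = thresholdQuantize n μ w := by
  unfold thresholdQuantize
  split_ifs with hℓ
  · exact eq_sign_mul_zpow_of_band hn hlow hmid htop hℓ
      (not_lt.mp ((lt_bandThreshold_iff_lt_bandLevel hμ hℓ).not.mpr (lt_irrefl _)))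
      fun s hs => (lt_bandThreshold_iff_lt_bandLevel hμ (hs.trans hℓ)).mpr hs
  · apply hzero
    have := (lt_bandThreshold_iff_lt_bandLevel hμ (x := |w|) (by omega : n - 1 < n)).mpr
      (by have := bandLevel_le (n := n) (μ := μ) |w|; omega)
    rwa [bandThreshold_last hn] at this

theorem thresholdQuantize_mul_self (w : ℝ) :
    thresholdQuantize n μ w * w =
      if bandLevel n μ |w| < n then (2 : ℝ) ^ (-(bandLevel n μ |w| : ℤ)) * |w| else 0 := by
  unfold thresholdQuantize
  split_ifs
  · rw [mul_right_comm, Real.sign_mul_self_eq_abs, mul_comm]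
  · exact zero_mul w

theorem thresholdQuantize_sq (hμ : 0 < μ) (w : ℝ) :
    thresholdQuantize n μ w ^ 2 =
      if bandLevel n μ |w| < n then (2 : ℝ) ^ (-(2 * (bandLevel n μ |w| : ℤ))) else 0 := by
  unfold thresholdQuantize
  split_ifs with hℓ
  · have hsign : Real.sign w ^ 2 = 1 := by
      rcases Real.sign_apply_eq_of_ne_zero w (ne_zero_of_bandLevel_lt hμ hℓ) with h | h <;>
        simp [h]
    rw [mul_pow, hsign, one_mul, ← zpow_natCast, ← zpow_mul]
    ring_nf
  · exact zero_pow two_ne_zero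

theorem thresholdQuantize_eq_zpow_or_eq_neg_iff (hμ : 0 < μ) {w : ℝ} {t : ℕ} (ht : t < n) :
    (thresholdQuantize n μ w = (2 : ℝ) ^ (-(t : ℤ)) ∨
        thresholdQuantize n μ w = -(2 : ℝ) ^ (-(t : ℤ))) ↔ bandLevel n μ |w| = t := by
  rw [← sq_eq_sq_iff_eq_or_eq_neg, thresholdQuantize_sq hμ, ← zpow_natCast, ← zpow_mul]
  split_ifs with hℓ
  · rw [zpow_right_inj₀ two_pos one_lt_two.ne']
    omega
  · simp only [(zpow_pos (two_pos (α := ℝ)) _).ne, false_iff]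
    omega

variable {N : ℕ} {W : Fin N → ℝ} {k : ℕ → ℕ}

theorem sum_thresholdQuantize_mul_self {σ : Equiv.Perm (Fin N)}
    (hσ : ∀ i j : Fin N, i ≤ j → |W (σ j)| ≤ |W (σ i)|)
    (hk : ∀ t < n, k t = #{i | bandLevel n μ |W i| = t}) :
    ∑ i, thresholdQuantize n μ (W i) * W i =
      ∑ t ∈ range n, (2 : ℝ) ^ (-(t : ℤ)) * groupAbsSum W σ (prefSum k t) (prefSum k t + k t) := by
  have hmono : Monotone fun r => bandLevel n μ |W (σ r)| := fun r r' h =>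
    bandLevel_antitone (hσ r r' h)
  simp only [thresholdQuantize_mul_self]
  refine (sum_ite_lt_eq_sum_range (fun i => bandLevel n μ |W i|) n
    fun t i => (2 : ℝ) ^ (-(t : ℤ)) * |W i|).trans (sum_congr rfl fun t ht => ?_)
  rw [← mul_sum, groupAbsSum_prefSum_eq_sum_filter hmono fun j hj => hk j (by simp at ht; omega)]

theorem sum_thresholdQuantize_sq (hμ : 0 < μ)
    (hk : ∀ t < n, k t = #{i | bandLevel n μ |W i| = t}) :
    ∑ i, thresholdQuantize n μ (W i) ^ 2 =
      ∑ t ∈ range n, (k t : ℝ) * (2 : ℝ) ^ (-(2 * (t : ℤ))) := by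
  simp only [thresholdQuantize_sq hμ]
  refine (sum_ite_lt_eq_sum_range (fun i => bandLevel n μ |W i|) n
    fun t _ => (2 : ℝ) ^ (-(2 * (t : ℤ)))).trans (sum_congr rfl fun t ht => ?_)
  rw [sum_const, nsmul_eq_mul, hk t (mem_range.mp ht)]

theorem sum_thresholdQuantize_mul_self_pos (hμ : 0 < μ) (hn : 1 ≤ n)
    (hW : ∃ i, bandThreshold n μ (n - 1) ≤ |W i|) :
    0 < ∑ i, thresholdQuantize n μ (W i) * W i := by
  obtain ⟨i₀, hi₀⟩ := hW
  refine sum_pos' (fun i _ => ?_) ⟨i₀, mem_univ _, ?_⟩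
  · rw [thresholdQuantize_mul_self]
    split_ifs <;> positivity
  · rw [thresholdQuantize_mul_self, if_pos (bandLevel_lt_of_bandThreshold_le hμ hn hi₀)]
    exact mul_pos (zpow_pos two_pos _) ((bandThreshold_pos hμ _).trans_le hi₀)

end Quantizer

theorem optimal_scale_thresholded_quantizer_general {N b : ℕ} (n : ℕ)
    (hn : n = 2 ^ (b - 2)) (μ : ℝ) (hμ : 0 < μ) (W : Fin N → ℝ)
    (hWbig : ∃ i : Fin N, (2 : ℝ) ^ ((2 : ℤ) - (n : ℤ)) / 3 * μ ≤ |W i|)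
    (σ : Equiv.Perm (Fin N))
    (hσ : ∀ i j : Fin N, i ≤ j → |W (σ j)| ≤ |W (σ i)|)
    (Qt : Fin N → ℝ)
    (hQzero : ∀ i : Fin N, |W i| < (2 : ℝ) ^ ((2 : ℤ) - (n : ℤ)) / 3 * μ → Qt i = 0)
    (hQlow : ∀ i : Fin N, (2 : ℝ) ^ ((2 : ℤ) - (n : ℤ)) / 3 * μ ≤ |W i| →
      |W i| < (2 : ℝ) ^ ((2 : ℤ) - (n : ℤ)) * μ →
      Qt i = Real.sign (W i) * (2 : ℝ) ^ ((1 : ℤ) - (n : ℤ)))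
    (hQmid : ∀ (i : Fin N) (t : ℕ), 1 ≤ t → t ≤ n - 2 →
      (2 : ℝ) ^ (-(t : ℤ)) * μ ≤ |W i| → |W i| < (2 : ℝ) ^ (-(t : ℤ) + 1) * μ →
      Qt i = Real.sign (W i) * (2 : ℝ) ^ (-(t : ℤ)))
    (hQtop : ∀ i : Fin N, μ ≤ |W i| → Qt i = Real.sign (W i))
    (kt : ℕ → ℕ)
    (hkt : ∀ t : ℕ, kt t = (Finset.univ.filter
      (fun i : Fin N => Qt i = (2 : ℝ) ^ (-(t : ℤ)) ∨ Qt i = -(2 : ℝ) ^ (-(t : ℤ)))).card)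
    (sstar : ℤ)
    (hsstar : sstar = ⌊Real.logb 2
      ((4 * ∑ t ∈ Finset.range n, (2 : ℝ) ^ (-(t : ℤ)) *
          groupAbsSum W σ (prefSum kt t) (prefSum kt t + kt t)) /
        (3 * ∑ t ∈ Finset.range n, (kt t : ℝ) * (2 : ℝ) ^ (-(2 * (t : ℤ)))))⌋) :
    ∀ s : ℤ,
      ∑ i, ((2 : ℝ) ^ sstar * Qt i - W i) ^ 2 ≤ ∑ i, ((2 : ℝ) ^ s * Qt i - W i) ^ 2 := by
  have hn₁ : 1 ≤ n := hn ▸ Nat.one_le_two_pow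
  obtain rfl : Qt = fun i => thresholdQuantize n μ (W i) :=
    funext fun i => eq_thresholdQuantize hn₁ hμ (hQzero i) (hQlow i) (hQmid i) (hQtop i)
  have hk : ∀ t < n, kt t = #{i | bandLevel n μ |W i| = t} := fun t ht => by
    simp only [hkt, thresholdQuantize_eq_zpow_or_eq_neg_iff hμ ht]
  rw [← sum_thresholdQuantize_mul_self hσ hk, ← sum_thresholdQuantize_sq hμ hk] at hsstar
  exact hsstar ▸ sum_sq_zpow_floor_logb_mul_sub_le _ W
    (sum_thresholdQuantize_mul_self_pos hμ hn₁ (bandThreshold_last hn₁ ▸ hWbig))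

/-- Theorem 2 of the paper: the optimal power-of-two scaling factor for the
one-parameter thresholded quantizer `Q̃*`.  Let `b ≥ 2`, `n = 2^(b−2)`, `μ > 0`, and let
`W ∈ ℝ^N` have entries of pairwise distinct nonzero absolute values (sorted decreasingly
in magnitude by `σ`), at least one entry having `|W i| ≥ (2^(2−n)/3) μ`.  The quantizer
`Q̃*` is given entrywise by the threshold rule (3), `k̃* t` counts the entries of `Q̃*`
equal to `±2^(−t)`, and then `s ↦ ‖2^s Q̃* − W‖²` over `s ∈ ℤ` attains its minimum at
`s̃* = ⌊log₂(4 ∑_t 2^(−t)‖W_{[k̃*_t]}‖₁ / (3 ∑_t k̃*_t 2^(−2t)))⌋`. -/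
theorem optimal_scale_thresholded_quantizer {N b : ℕ} (hb : 2 ≤ b) (n : ℕ)
    (hn : n = 2 ^ (b - 2)) (μ : ℝ) (hμ : 0 < μ) (W : Fin N → ℝ)
    (hWne : ∀ i, W i ≠ 0)
    (hWdist : ∀ i j : Fin N, i ≠ j → |W i| ≠ |W j|)
    (hWbig : ∃ i : Fin N, (2 : ℝ) ^ ((2 : ℤ) - (n : ℤ)) / 3 * μ ≤ |W i|)
    (σ : Equiv.Perm (Fin N))
    (hσ : ∀ i j : Fin N, i ≤ j → |W (σ j)| ≤ |W (σ i)|)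
    (Qt : Fin N → ℝ)
    (hQzero : ∀ i : Fin N, |W i| < (2 : ℝ) ^ ((2 : ℤ) - (n : ℤ)) / 3 * μ → Qt i = 0)
    (hQlow : ∀ i : Fin N, (2 : ℝ) ^ ((2 : ℤ) - (n : ℤ)) / 3 * μ ≤ |W i| →
      |W i| < (2 : ℝ) ^ ((2 : ℤ) - (n : ℤ)) * μ →
      Qt i = Real.sign (W i) * (2 : ℝ) ^ ((1 : ℤ) - (n : ℤ)))
    (hQmid : ∀ (i : Fin N) (t : ℕ), 1 ≤ t → t ≤ n - 2 →
      (2 : ℝ) ^ (-(t : ℤ)) * μ ≤ |W i| → |W i| < (2 : ℝ) ^ (-(t : ℤ) + 1) * μ →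
      Qt i = Real.sign (W i) * (2 : ℝ) ^ (-(t : ℤ)))
    (hQtop : ∀ i : Fin N, μ ≤ |W i| → Qt i = Real.sign (W i))
    (kt : ℕ → ℕ)
    (hkt : ∀ t : ℕ, kt t = (Finset.univ.filter
      (fun i : Fin N => Qt i = (2 : ℝ) ^ (-(t : ℤ)) ∨ Qt i = -(2 : ℝ) ^ (-(t : ℤ)))).card)
    (sstar : ℤ)
    (hsstar : sstar = ⌊Real.logb 2
      ((4 * ∑ t ∈ Finset.range n, (2 : ℝ) ^ (-(t : ℤ)) *
          groupAbsSum W σ (prefSum kt t) (prefSum kt t + kt t)) /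
        (3 * ∑ t ∈ Finset.range n, (kt t : ℝ) * (2 : ℝ) ^ (-(2 * (t : ℤ)))))⌋) :
    ∀ s : ℤ,
      ∑ i, ((2 : ℝ) ^ sstar * Qt i - W i) ^ 2 ≤ ∑ i, ((2 : ℝ) ^ s * Qt i - W i) ^ 2 :=
  optimal_scale_thresholded_quantizer_general n hn μ hμ W hWbig σ hσ Qt hQzero hQlow hQmid hQtop kt
    hkt sstar hsstar
end
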